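/- In SSynch with non-rigid movements with parameter δ > 0, two finite-state robots knowing δ and running the 3-state algorithm below, both starting in state A, solve Rendezvous from every pair of initial positions in ℝ², under every fair schedule and every adversarial choice of stopping points. In particular, Rendezvous of two finite-state robots in non-rigid SSynch with knowledge of δ is solvable with three internal states. -/

import Mathlib

/-- Points in the plane. -/
abbrev Pt := EuclideanSpace ℝ (Fin 2)

/-- The three internal states. -/
inductive StABC | A | B | C
deriving DecidableEq

/-- A configuration of two finite-state robots: positions and internal states
(robot `r` is `false`, robot `s` is `true`); each robot sees only its own
state. -/
structure ConfigFS where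
  pos : Bool → Pt
  st : Bool → StABC

/-- The 3-state algorithm with knowledge of `δ`, for a robot in internal state
`s` at position `p` seeing the other robot at `q` (both robots measure true
Euclidean distances, `d = ‖q - p‖`): returns the new internal state and the
destination. If `d = 0`: keep the state and stay. State `A`: if `d < δ/2`,
keep `A` and move to the point at distance `δ/2` from the other robot, on the
far side; if `δ/2 ≤ d < δ`, switch to `B` and move to `q`; if `d ≥ δ`, keep
`A` and move to the point at distance `δ/4` before the midpoint. State `B`:
if `δ/2 ≤ d < δ`, switch to `C` and move to the midpoint; otherwise keep `B`
and stay. State `C`: keep `C` and move to `q`. -/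
noncomputable def algo16 (δ : ℝ) (s : StABC) (p q : Pt) : StABC × Pt :=
  let d := ‖q - p‖
  if d = 0 then (s, p)
  else match s with
  | .A =>
      if d < δ / 2 then (.A, p + (1 - δ / (2 * d)) • (q - p))
      else if d < δ then (.B, q)
      else (.A, p + (1/2 - δ / (4 * d)) • (q - p))
  | .B =>
      if δ / 2 ≤ d ∧ d < δ then (.C, p + (1/2 : ℝ) • (q - p))
      else (.B, p)
  | .C => (.C, q)

/-- One SSynch round with non-rigid movements with parameter `δ`: each
activated robot `i` (those with `act i = true`) simultaneously observes the
other robot's position, computes its new internal state and destination, and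
moves along the straight segment toward the destination, stopping at an
adversarially chosen point that either is the destination or lies at distance
at least `δ` from its starting point; non-activated robots do nothing. -/
def StepFS (δ : ℝ) (act : Bool → Bool) (c c' : ConfigFS) : Prop :=
  ∀ i : Bool,
    (act i = true →
      c'.st i = (algo16 δ (c.st i) (c.pos i) (c.pos (!i))).1 ∧
      c'.pos i ∈ segment ℝ (c.pos i) (algo16 δ (c.st i) (c.pos i) (c.pos (!i))).2 ∧
      (c'.pos i = (algo16 δ (c.st i) (c.pos i) (c.pos (!i))).2 ∨
        δ ≤ ‖c'.pos i - c.pos i‖)) ∧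
    (act i = false → c'.pos i = c.pos i ∧ c'.st i = c.st i)

/-- A legal fair SSynch schedule: at every round a nonempty set of robots is
activated, and each robot is activated infinitely often. -/
def FairSched (sched : ℕ → Bool → Bool) : Prop :=
  (∀ n, sched n false = true ∨ sched n true = true) ∧
  (∀ i n, ∃ m, n ≤ m ∧ sched m i = true)

/-- Rendezvous is solved: from some round on, the two robots occupy the same
point and never move again. -/
def SolvesFS (exec : ℕ → ConfigFS) : Prop :=
  ∃ N : ℕ, ∀ n, N ≤ n → ∀ i, (exec n).pos i = (exec N).pos false

/-!
While both robots are in `A` at distance `d ≥ δ`, each moves toward the other by at most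
`d / 2 - δ / 4`, and an activated one by at least `δ / 4`: it either reaches its destination,
which is `d / 2 - δ / 4 ≥ δ / 4` away, or covers `δ`. So the distance drops by `δ / 4` per round
until it is below `δ`. From then on every destination is closer than `δ`, all moves are rigid,
and the rest is a finite case analysis: from `0 < d < δ / 2` the robots back off to a distance in
`[δ / 2, δ)`; there an activated `A` robot jumps onto the other one and turns `B` (if both do,
they swap); two `B` robots then move to the midpoint and turn `C`. If only one of them did, it is
at distance `d / 2 < δ / 2` from a `B` robot, which no longer moves, and fairness makes it join
that robot. Once together, nobody moves.
-/

namespace Rendezvous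

section Towards

variable {E : Type*} [NormedAddCommGroup E] [NormedSpace ℝ E]

/-- The point at signed distance `μ` from `p` on the ray toward `q` (`p` itself when `q = p`). -/
noncomputable def towards (p q : E) (μ : ℝ) : E := p + (μ / ‖q - p‖) • (q - p)

@[simp]
lemma towards_zero (p q : E) : towards p q 0 = p := by
  simp [towards]

lemma towards_norm_sub {p q : E} (h : q ≠ p) : towards p q ‖q - p‖ = q := by
  rw [towards, div_self (norm_ne_zero_iff.mpr (sub_ne_zero.mpr h)), one_smul,
    add_sub_cancel]

lemma norm_towards_sub_le (p q : E) (μ : ℝ) : ‖towards p q μ - p‖ ≤ |μ| := by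
  rcases eq_or_ne q p with rfl | h
  · simp [towards]
  · rw [towards, add_sub_cancel_left, norm_smul, norm_div, Real.norm_eq_abs, norm_norm,
      div_mul_cancel₀ _ (norm_ne_zero_iff.mpr (sub_ne_zero.mpr h))]

lemma exists_eq_towards_of_mem_segment {p q x : E} {μ : ℝ}
    (hx : x ∈ segment ℝ p (towards p q μ)) :
    ∃ θ ∈ Set.Icc (0 : ℝ) 1, x = towards p q (θ * μ) := by
  rw [segment_eq_image'] at hx
  obtain ⟨θ, hθ, rfl⟩ := hx
  refine ⟨θ, hθ, ?_⟩
  simp only [towards, add_sub_cancel_left, smul_smul, mul_div_assoc]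

lemma norm_towards_sub_towards {p q : E} (h : q ≠ p) (μ ν : ℝ) :
    ‖towards q p ν - towards p q μ‖ = |‖q - p‖ - μ - ν| := by
  have hd : ‖q - p‖ ≠ 0 := norm_ne_zero_iff.mpr (sub_ne_zero.mpr h)
  have : towards q p ν - towards p q μ = ((‖q - p‖ - μ - ν) / ‖q - p‖) • (q - p) := by
    rw [towards, towards, norm_sub_rev p q, sub_div, sub_div, div_self hd]
    module
  rw [this, norm_smul, norm_div, Real.norm_eq_abs, norm_norm, div_mul_cancel₀ _ hd]

lemma eq_of_mem_segment_of_norm_sub_lt {δ : ℝ} {p y x : E} (hx : x ∈ segment ℝ p y)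
    (hstop : x = y ∨ δ ≤ ‖x - p‖) (hy : ‖y - p‖ < δ) : x = y :=
  hstop.resolve_right fun h => (h.trans (norm_sub_le_of_mem_segment hx)).not_gt hy

end Towards

section Algorithm

variable {δ : ℝ} {p q : Pt}

lemma algo16_A_of_lt_half (h0 : 0 < ‖q - p‖) (hd : ‖q - p‖ < δ / 2) :
    algo16 δ .A p q = (.A, towards p q (‖q - p‖ - δ / 2)) := by
  simp only [algo16, h0.ne', hd, if_true, if_false, towards]
  congr 3
  field_simp

lemma algo16_A_of_half_le_of_lt (hd₁ : δ / 2 ≤ ‖q - p‖) (hd₂ : ‖q - p‖ < δ) :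
    algo16 δ .A p q = (.B, towards p q ‖q - p‖) := by
  have h0 : 0 < ‖q - p‖ := by linarith
  simp only [algo16, h0.ne', not_lt.mpr hd₁, hd₂, if_true, if_false]
  rw [towards_norm_sub (sub_ne_zero.mp (norm_pos_iff.mp h0))]

lemma algo16_A_of_le (hδ : 0 < δ) (hd : δ ≤ ‖q - p‖) :
    algo16 δ .A p q = (.A, towards p q (‖q - p‖ / 2 - δ / 4)) := by
  have h0 : 0 < ‖q - p‖ := hδ.trans_le hd
  simp only [algo16, h0.ne', not_lt.mpr hd, not_lt.mpr (by linarith : δ / 2 ≤ ‖q - p‖),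
    if_false, towards]
  congr 3
  field_simp

lemma algo16_B_of_half_le_of_lt (hd₁ : δ / 2 ≤ ‖q - p‖) (hd₂ : ‖q - p‖ < δ) :
    algo16 δ .B p q = (.C, towards p q (‖q - p‖ / 2)) := by
  have h0 : 0 < ‖q - p‖ := by linarith
  simp only [algo16, h0.ne', hd₁, hd₂, and_self, if_true, if_false, towards]
  congr 3
  field_simp

lemma algo16_B_of_lt_half (hd : ‖q - p‖ < δ / 2) : algo16 δ .B p q = (.B, p) := by
  simp [algo16, not_le.mpr hd]

lemma algo16_C (h0 : 0 < ‖q - p‖) : algo16 δ .C p q = (.C, towards p q ‖q - p‖) := by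
  simp only [algo16, h0.ne', if_false]
  rw [towards_norm_sub (sub_ne_zero.mp (norm_pos_iff.mp h0))]

end Algorithm

noncomputable def gap (c : ConfigFS) : ℝ := ‖c.pos true - c.pos false‖

lemma gap_eq_norm (c : ConfigFS) (i : Bool) : gap c = ‖c.pos (!i) - c.pos i‖ := by
  cases i
  · rfl
  · exact norm_sub_rev _ _

lemma gap_nonneg (c : ConfigFS) : 0 ≤ gap c := norm_nonneg _

lemma gap_eq_zero_iff {c : ConfigFS} : gap c = 0 ↔ c.pos true = c.pos false :=
  norm_sub_eq_zero_iff

lemma gap_eq_abs_sub_of_towards {c c' : ConfigFS} {μ ν : ℝ} (h0 : 0 < gap c)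
    (hf : c'.pos false = towards (c.pos false) (c.pos true) μ)
    (ht : c'.pos true = towards (c.pos true) (c.pos false) ν) :
    gap c' = |gap c - μ - ν| := by
  rw [gap, hf, ht, norm_towards_sub_towards (norm_sub_pos_iff.mp h0)]
  rfl

def ReadyToMeet (δ : ℝ) (i : Bool) (c : ConfigFS) : Prop :=
  c.st i = .C ∧ c.st (!i) = .B ∧ 0 < gap c ∧ gap c < δ / 2

namespace StepFS

variable {δ : ℝ} {act : Bool → Bool} {c c' : ConfigFS}

lemma rigid_of_abs_lt (h : StepFS δ act c c') (i : Bool) {s : StABC} {μ : ℝ}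
    (halg : algo16 δ (c.st i) (c.pos i) (c.pos (!i)) = (s, towards (c.pos i) (c.pos (!i)) μ))
    (hμ : |μ| < δ) :
    c'.st i = (if act i then s else c.st i) ∧
      c'.pos i = towards (c.pos i) (c.pos (!i)) (if act i then μ else 0) := by
  cases hi : act i
  · simpa [and_comm] using (h i).2 hi
  · obtain ⟨hst, hseg, hstop⟩ := (h i).1 hi
    rw [halg] at hst hseg hstop
    have hpos := eq_of_mem_segment_of_norm_sub_lt hseg hstop
      ((norm_towards_sub_le _ _ _).trans_lt hμ)
    simpa using ⟨hst, hpos⟩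

lemma pos_eq_of_gap_eq_zero (h : StepFS δ act c c') (hc : gap c = 0) (i : Bool) :
    c'.pos i = c.pos i := by
  cases hi : act i
  · exact ((h i).2 hi).1
  · have hseg := ((h i).1 hi).2.1
    rwa [show algo16 δ (c.st i) (c.pos i) (c.pos (!i)) = (c.st i, c.pos i) by
      simp [algo16, ← gap_eq_norm, hc], segment_same, Set.mem_singleton_iff] at hseg

lemma A_of_lt_half (h : StepFS δ act c c') (i : Bool) (hA : c.st i = .A) (h0 : 0 < gap c)
    (hd : gap c < δ / 2) :
    c'.st i = .A ∧
      c'.pos i = towards (c.pos i) (c.pos (!i)) (if act i then gap c - δ / 2 else 0) := by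
  rw [gap_eq_norm c i] at h0 hd ⊢
  have := rigid_of_abs_lt h i (by rw [hA, algo16_A_of_lt_half h0 hd])
    (abs_lt.mpr ⟨by linarith, by linarith⟩)
  simpa [hA] using this

lemma A_of_half_le_of_lt (h : StepFS δ act c c') (i : Bool) (hA : c.st i = .A)
    (hd₁ : δ / 2 ≤ gap c) (hd₂ : gap c < δ) :
    c'.st i = (if act i then .B else .A) ∧
      c'.pos i = towards (c.pos i) (c.pos (!i)) (if act i then gap c else 0) := by
  rw [gap_eq_norm c i] at hd₁ hd₂ ⊢
  simpa [hA] using rigid_of_abs_lt h i (by rw [hA, algo16_A_of_half_le_of_lt hd₁ hd₂])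
    (by rwa [abs_norm])

lemma B_of_half_le_of_lt (h : StepFS δ act c c') (i : Bool) (hB : c.st i = .B)
    (hd₁ : δ / 2 ≤ gap c) (hd₂ : gap c < δ) :
    c'.st i = (if act i then .C else .B) ∧
      c'.pos i = towards (c.pos i) (c.pos (!i)) (if act i then gap c / 2 else 0) := by
  rw [gap_eq_norm c i] at hd₁ hd₂ ⊢
  simpa [hB] using rigid_of_abs_lt h i (by rw [hB, algo16_B_of_half_le_of_lt hd₁ hd₂])
    (abs_lt.mpr ⟨by linarith [norm_nonneg (c.pos (!i) - c.pos i)], by linarith⟩)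

lemma B_of_lt_half (h : StepFS δ act c c') (i : Bool) (hB : c.st i = .B)
    (hd : gap c < δ / 2) : c'.st i = .B ∧ c'.pos i = c.pos i := by
  rw [gap_eq_norm c i] at hd
  have := rigid_of_abs_lt h i (μ := 0) (by rw [hB, algo16_B_of_lt_half hd, towards_zero])
    (by rw [abs_zero]; linarith [norm_nonneg (c.pos (!i) - c.pos i)])
  simpa [hB] using this

lemma C_of_pos_of_lt (h : StepFS δ act c c') (i : Bool) (hC : c.st i = .C) (h0 : 0 < gap c)
    (hd : gap c < δ) :
    c'.st i = .C ∧
      c'.pos i = towards (c.pos i) (c.pos (!i)) (if act i then gap c else 0) := by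
  rw [gap_eq_norm c i] at h0 hd ⊢
  have := rigid_of_abs_lt h i (by rw [hC, algo16_C h0]) (by rwa [abs_norm])
  simpa [hC] using this

lemma A_of_le (h : StepFS δ act c c') (hδ : 0 < δ) (i : Bool) (hA : c.st i = .A)
    (hd : δ ≤ gap c) :
    c'.st i = .A ∧ ∃ μ, c'.pos i = towards (c.pos i) (c.pos (!i)) μ ∧ 0 ≤ μ ∧
      μ ≤ gap c / 2 - δ / 4 ∧ (act i = true → δ / 4 ≤ μ) := by
  cases hi : act i
  · obtain ⟨hp, hs⟩ := (h i).2 hi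
    exact ⟨hs.trans hA, 0, by simp [hp], le_rfl, by linarith, by simp⟩
  · obtain ⟨hst, hseg, hstop⟩ := (h i).1 hi
    have halg := algo16_A_of_le hδ (gap_eq_norm c i ▸ hd)
    rw [← gap_eq_norm] at halg
    rw [hA, halg] at hst hseg hstop
    obtain ⟨θ, ⟨hθ₀, hθ₁⟩, hx⟩ := exists_eq_towards_of_mem_segment hseg
    refine ⟨hst, ?_⟩
    rcases hstop with hdest | hfar
    · exact ⟨_, hdest, by linarith, le_rfl, fun _ => by linarith⟩
    · have hμ : 0 ≤ θ * (gap c / 2 - δ / 4) := mul_nonneg hθ₀ (by linarith)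
      have hmoved := hfar.trans (hx ▸ norm_towards_sub_le _ _ _)
      rw [abs_of_nonneg hμ] at hmoved
      exact ⟨_, hx, hμ, mul_le_of_le_one_left (by linarith) hθ₁, fun _ => by linarith⟩

lemma gap_le_of_AA_of_le (h : StepFS δ act c c') (hδ : 0 < δ)
    (hact : act false = true ∨ act true = true) (hA : ∀ i, c.st i = .A) (hd : δ ≤ gap c) :
    (∀ i, c'.st i = .A) ∧ gap c' ≤ gap c - δ / 4 := by
  obtain ⟨hsf, μ, hf, hμ₀, hμ₁, hμ₂⟩ := A_of_le h hδ false (hA false) hd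
  obtain ⟨hst, ν, ht, hν₀, hν₁, hν₂⟩ := A_of_le h hδ true (hA true) hd
  have hmoved : δ / 4 ≤ μ + ν := hact.elim (fun hf => by linarith [hμ₂ hf])
    (fun ht => by linarith [hν₂ ht])
  refine ⟨Bool.forall_bool.mpr ⟨hsf, hst⟩, ?_⟩
  rw [gap_eq_abs_sub_of_towards (by linarith) hf ht, abs_of_pos (by linarith)]
  linarith

lemma gap_of_AA_of_lt_half (h : StepFS δ act c c') (hact : act false = true ∨ act true = true)
    (hA : ∀ i, c.st i = .A) (h0 : 0 < gap c) (hd : gap c < δ / 2) :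
    (∀ i, c'.st i = .A) ∧ δ / 2 ≤ gap c' ∧ gap c' < δ := by
  obtain ⟨hsf, hf⟩ := A_of_lt_half h false (hA false) h0 hd
  obtain ⟨hst, ht⟩ := A_of_lt_half h true (hA true) h0 hd
  refine ⟨Bool.forall_bool.mpr ⟨hsf, hst⟩, ?_⟩
  rw [gap_eq_abs_sub_of_towards h0 hf ht]
  cases hF : act false <;> cases hT : act true <;>
    simp only [hF, hT, Bool.false_eq_true, or_self, if_true, if_false] at hact ⊢
  all_goals exact ⟨le_abs.mpr (.inl (by linarith)), abs_lt.mpr ⟨by linarith, by linarith⟩⟩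

lemma gap_of_AA_of_half_le_of_lt (h : StepFS δ act c c')
    (hact : act false = true ∨ act true = true) (hA : ∀ i, c.st i = .A)
    (hd₁ : δ / 2 ≤ gap c) (hd₂ : gap c < δ) :
    gap c' = 0 ∨ (∀ i, c'.st i = .B) ∧ gap c' = gap c := by
  obtain ⟨hsf, hf⟩ := A_of_half_le_of_lt h false (hA false) hd₁ hd₂
  obtain ⟨hst, ht⟩ := A_of_half_le_of_lt h true (hA true) hd₁ hd₂
  rw [gap_eq_abs_sub_of_towards (by linarith) hf ht, Bool.forall_bool, hsf, hst]
  cases hF : act false <;> cases hT : act true <;> simp [hF, hT, gap_nonneg] at hact ⊢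

lemma readyToMeet_of_BB_of_half_le_of_lt (h : StepFS δ act c c')
    (hact : act false = true ∨ act true = true) (hB : ∀ i, c.st i = .B)
    (hd₁ : δ / 2 ≤ gap c) (hd₂ : gap c < δ) :
    gap c' = 0 ∨ ∃ i, ReadyToMeet δ i c' := by
  obtain ⟨hsf, hf⟩ := B_of_half_le_of_lt h false (hB false) hd₁ hd₂
  obtain ⟨hst, ht⟩ := B_of_half_le_of_lt h true (hB true) hd₁ hd₂
  have hgap := gap_eq_abs_sub_of_towards (by linarith) hf ht
  have hready : ∀ i, c'.st i = .C → c'.st (!i) = .B → gap c' = gap c / 2 → ReadyToMeet δ i c' :=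
    fun i hC hB hg => ⟨hC, hB, by linarith, by linarith⟩
  cases hF : act false <;> cases hT : act true <;>
    simp only [hF, hT, if_true, if_false, Bool.false_eq_true, or_self] at hact hsf hst hgap
  · exact .inr ⟨true, hready true hst hsf (by rw [hgap, abs_of_nonneg] <;> linarith)⟩
  · exact .inr ⟨false, hready false hsf hst (by rw [hgap, abs_of_nonneg] <;> linarith)⟩
  · exact .inl (by rw [hgap, abs_of_nonneg] <;> linarith)

lemma gap_eq_zero_of_readyToMeet (h : StepFS δ act c c') {i : Bool} (hc : ReadyToMeet δ i c)
    (hi : act i = true) : gap c' = 0 := by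
  obtain ⟨hC, hB, h0, hd⟩ := hc
  have hmover := (C_of_pos_of_lt h i hC h0 (by linarith)).2
  have hother := (B_of_lt_half h (!i) hB hd).2
  rw [hi, if_pos rfl, gap_eq_norm c i, towards_norm_sub (sub_ne_zero.mp (norm_pos_iff.mp
    (gap_eq_norm c i ▸ h0)))] at hmover
  rw [gap_eq_norm c' i, hmover, hother, sub_self, norm_zero]

lemma readyToMeet_of_not_act (h : StepFS δ act c c') {i : Bool} (hc : ReadyToMeet δ i c)
    (hi : act i = false) : ReadyToMeet δ i c' := by
  obtain ⟨hC, hB, h0, hd⟩ := hc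
  obtain ⟨hpos, hst⟩ := (h i).2 hi
  obtain ⟨hst', hpos'⟩ := B_of_lt_half h (!i) hB hd
  have hgap : gap c' = gap c := by rw [gap_eq_norm c' i, gap_eq_norm c i, hpos, hpos']
  exact ⟨hst.trans hC, hst', hgap ▸ h0, hgap ▸ hd⟩

end StepFS

section Execution

variable {δ : ℝ} {exec : ℕ → ConfigFS} {sched : ℕ → Bool → Bool}

lemma exists_AA_gap_lt (hδ : 0 < δ) (hstep : ∀ n, StepFS δ (sched n) (exec n) (exec (n + 1)))
    (hact : ∀ n, sched n false = true ∨ sched n true = true) (k : ℕ) :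
    ∀ n, (∀ i, (exec n).st i = .A) → gap (exec n) ≤ k * (δ / 4) →
      ∃ m, (∀ i, (exec m).st i = .A) ∧ gap (exec m) < δ := by
  induction k with
  | zero =>
    intro n hA hd
    exact ⟨n, hA, by rw [Nat.cast_zero, zero_mul] at hd; linarith⟩
  | succ k ih =>
    intro n hA hd
    by_cases hlt : gap (exec n) < δ
    · exact ⟨n, hA, hlt⟩
    obtain ⟨hA', hd'⟩ := StepFS.gap_le_of_AA_of_le (hstep n) hδ (hact n) hA (not_lt.mp hlt)
    exact ih (n + 1) hA' (by push_cast at hd; linarith)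

lemma exists_gap_eq_zero_of_readyToMeet
    (hstep : ∀ n, StepFS δ (sched n) (exec n) (exec (n + 1))) {i : Bool} (k : ℕ) :
    ∀ n, ReadyToMeet δ i (exec n) → sched (n + k) i = true → ∃ m, gap (exec m) = 0 := by
  induction k with
  | zero => exact fun n hc hi => ⟨n + 1, StepFS.gap_eq_zero_of_readyToMeet (hstep n) hc hi⟩
  | succ k ih =>
    intro n hc hi
    cases hn : sched n i
    · exact ih (n + 1) (StepFS.readyToMeet_of_not_act (hstep n) hc hn)
        (by rwa [add_right_comm, add_assoc])
    · exact ⟨n + 1, StepFS.gap_eq_zero_of_readyToMeet (hstep n) hc hn⟩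

lemma exists_gap_eq_zero_of_AA_of_half_le_of_lt
    (hstep : ∀ n, StepFS δ (sched n) (exec n) (exec (n + 1))) (hfair : FairSched sched) (n : ℕ)
    (hA : ∀ i, (exec n).st i = .A) (hd₁ : δ / 2 ≤ gap (exec n)) (hd₂ : gap (exec n) < δ) :
    ∃ m, gap (exec m) = 0 := by
  rcases StepFS.gap_of_AA_of_half_le_of_lt (hstep n) (hfair.1 n) hA hd₁ hd₂
    with h0 | ⟨hB, hgap⟩
  · exact ⟨n + 1, h0⟩
  rcases StepFS.readyToMeet_of_BB_of_half_le_of_lt (hstep (n + 1)) (hfair.1 (n + 1)) hB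
    (hgap ▸ hd₁) (hgap ▸ hd₂) with h0 | ⟨i, hc⟩
  · exact ⟨n + 2, h0⟩
  obtain ⟨m, hm, hi⟩ := hfair.2 i (n + 2)
  exact exists_gap_eq_zero_of_readyToMeet hstep (m - (n + 2)) (n + 2) hc
    (by rwa [Nat.add_sub_cancel' hm])

lemma exists_gap_eq_zero_of_AA_of_lt
    (hstep : ∀ n, StepFS δ (sched n) (exec n) (exec (n + 1))) (hfair : FairSched sched) (n : ℕ)
    (hA : ∀ i, (exec n).st i = .A) (hd : gap (exec n) < δ) :
    ∃ m, gap (exec m) = 0 := by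
  rcases (gap_nonneg (exec n)).eq_or_lt with h0 | h0
  · exact ⟨n, h0.symm⟩
  by_cases hd₁ : δ / 2 ≤ gap (exec n)
  · exact exists_gap_eq_zero_of_AA_of_half_le_of_lt hstep hfair n hA hd₁ hd
  obtain ⟨hA', hd₁', hd₂'⟩ :=
    StepFS.gap_of_AA_of_lt_half (hstep n) (hfair.1 n) hA h0 (not_le.mp hd₁)
  exact exists_gap_eq_zero_of_AA_of_half_le_of_lt hstep hfair (n + 1) hA' hd₁' hd₂'

lemma pos_eq_of_gap_eq_zero (hstep : ∀ n, StepFS δ (sched n) (exec n) (exec (n + 1)))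
    {N : ℕ} (hN : gap (exec N) = 0) : ∀ n, N ≤ n → ∀ i, (exec n).pos i = (exec N).pos i := by
  intro n hn
  induction n, hn using Nat.le_induction with
  | base => exact fun _ => rfl
  | succ n _ ih =>
    have hgap : gap (exec n) = 0 := by rw [gap, ih true, ih false]; exact hN
    exact fun i => (StepFS.pos_eq_of_gap_eq_zero (hstep n) hgap i).trans (ih i)

end Execution

end Rendezvous

open Rendezvous

/-- In SSynch with non-rigid movements with parameter `δ > 0`, two
finite-state robots knowing `δ` and running the 3-state algorithm, both
starting in state `A`, solve Rendezvous from every pair of initial positions,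
under every fair schedule and every adversarial choice of stopping points:
Rendezvous of two `FState` robots in non-rigid SSynch with knowledge of `δ`
is solvable with three internal states. -/
theorem rendezvous_fstate_ssynch_nonrigid_3states (δ : ℝ) (hδ : 0 < δ)
    (exec : ℕ → ConfigFS) (sched : ℕ → Bool → Bool) (hfair : FairSched sched)
    (hinit : ∀ i, (exec 0).st i = StABC.A)
    (hstep : ∀ n, StepFS δ (sched n) (exec n) (exec (n + 1))) :
    SolvesFS exec := by
  obtain ⟨k, hk⟩ := exists_nat_ge (gap (exec 0) / (δ / 4))
  obtain ⟨m, hA, hd⟩ := exists_AA_gap_lt hδ hstep hfair.1 k 0 hinit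
    (by rwa [div_le_iff₀ (by positivity)] at hk)
  obtain ⟨N, hN⟩ := exists_gap_eq_zero_of_AA_of_lt hstep hfair m hA hd
  refine ⟨N, fun n hn i => ?_⟩
  rw [pos_eq_of_gap_eq_zero hstep hN n hn i]
  cases i
  · rfl
  · exact gap_eq_zero_iff.mp hN
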